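/- Let (X, ν) be a probability space, T an ergodic invertible measure-preserving transformation of (X, ν), and J a Markov operator on L²(X, ν). If J ∘ T̂ = J, then J = Θ. -/

import Mathlib

/-! By von Neumann's mean ergodic theorem, the Cesàro averages of the powers of the Koopman
operator `T̂` converge strongly to the orthogonal projection onto the `T̂`-fixed vectors, and
ergodicity makes these exactly the constants, so that projection is `Θ`. As `J T̂ⁿ = J`, the
operator `J` is unchanged by averaging, hence `J = J Θ`, and `J Θ = Θ` because `J 1 = 1`. -/

open MeasureTheory Filter
open scoped RealInnerProductSpace ENNReal

noncomputable section

variable {X : Type*} [MeasurableSpace X]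

/-- The constant function `1` as an element of `L²(X, ν)`. -/
def oneL2 (ν : Measure X) [IsProbabilityMeasure ν] : Lp ℝ 2 ν :=
  Lp.const 2 ν (1 : ℝ)

/-- `J` is a Markov operator on `L²(X, ν)`: it is positivity preserving,
`J 1 = 1` and `J* 1 = 1`. -/
structure IsMarkov (ν : Measure X) [IsProbabilityMeasure ν]
    (J : Lp ℝ 2 ν →L[ℝ] Lp ℝ 2 ν) : Prop where
  pos : ∀ f : Lp ℝ 2 ν, 0 ≤ f → 0 ≤ J f
  map_one : J (oneL2 ν) = oneL2 ν
  adjoint_map_one : (ContinuousLinearMap.adjoint J) (oneL2 ν) = oneL2 ν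

/-- `Θ`, the orthogonal projection of `L²(X, ν)` onto the constants:
`Θ f = (∫ f dν) • 1 = ⟪1, f⟫ • 1`. -/
def Theta (ν : Measure X) [IsProbabilityMeasure ν] : Lp ℝ 2 ν →L[ℝ] Lp ℝ 2 ν :=
  (innerSL ℝ (oneL2 ν)).smulRight (oneL2 ν)

/-- The Koopman operator `f ↦ f ∘ T` on `L²(X, ν)` of a measure-preserving map `T`. -/
def koopman (ν : Measure X) [IsProbabilityMeasure ν] {T : X → X}
    (hT : MeasurePreserving T ν ν) : Lp ℝ 2 ν →L[ℝ] Lp ℝ 2 ν where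
  toFun := Lp.compMeasurePreserving T hT
  map_add' := map_add _
  map_smul' := by
    intro c g
    refine Lp.ext ?_
    have h1 := Lp.coeFn_compMeasurePreserving (μ := ν) (c • g) hT
    have h2 := (Lp.coeFn_smul c g).comp_tendsto hT.quasiMeasurePreserving.tendsto_ae
    have h3 := Lp.coeFn_smul c (Lp.compMeasurePreserving T hT g)
    have h4 := Lp.coeFn_compMeasurePreserving (μ := ν) g hT
    filter_upwards [h1, h2, h3, h4] with x e1 e2 e3 e4
    simp only [Function.comp_apply, Pi.smul_apply, RingHom.id_apply] at *
    rw [e1, e2, e3, e4]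
  cont := (Lp.isometry_compMeasurePreserving hT).continuous

/-- The map `T^i` for `i : ℤ`, where `T` is an invertible (bi-measurable) map. -/
def mpowZ (T : X ≃ᵐ X) : ℤ → X → X
  | Int.ofNat n => (⇑T)^[n]
  | Int.negSucc n => (⇑T.symm)^[n + 1]

/-- `T` is totally ergodic: all nonzero powers of `T` are ergodic. -/
def TotallyErgodic (ν : Measure X) (T : X ≃ᵐ X) : Prop :=
  ∀ i : ℤ, i ≠ 0 → Ergodic (mpowZ T i) ν

/-- The Koopman operator of the power `T^i`, `i : ℤ`, of an invertible
measure-preserving transformation `T`. -/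
def koopmanZ (ν : Measure X) [IsProbabilityMeasure ν] (T : X ≃ᵐ X)
    (hT : MeasurePreserving T ν ν) : ℤ → (Lp ℝ 2 ν →L[ℝ] Lp ℝ 2 ν)
  | Int.ofNat n => (koopman ν hT) ^ n
  | Int.negSucc n => (koopman ν (hT.symm T)) ^ (n + 1)

namespace ContinuousLinearMap

variable {𝕜 E F : Type*} [RCLike 𝕜] [NormedAddCommGroup E] [InnerProductSpace 𝕜 E]
  [CompleteSpace E] [AddCommMonoid F] [Module 𝕜 F] [TopologicalSpace F] [T2Space F]

theorem comp_starProjection_eqLocus_of_comp_eq {K : E →L[𝕜] E} (hK : ‖K‖ ≤ 1) {J : E →L[𝕜] F}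
    (h : J ∘L K = J) : J ∘L (K.eqLocus (1 : E →L[𝕜] E)).starProjection = J := by
  ext x
  have hJ : ⇑J ∘ ⇑K = ⇑J := congrArg DFunLike.coe h
  have hlim := (J.continuous.tendsto _).comp (K.tendsto_birkhoffAverage_orthogonalProjection hK x)
  refine tendsto_nhds_unique hlim (tendsto_const_nhds.congr' ?_)
  filter_upwards [eventually_ne_atTop 0] with n hn
  simp only [Function.comp_apply, map_birkhoffAverage 𝕜 𝕜 J, Function.comp_id]
  rw [birkhoffAverage_of_comp_eq (R := 𝕜) hJ (Nat.cast_ne_zero.2 hn)]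

end ContinuousLinearMap

section L2

variable (ν : Measure X) [IsProbabilityMeasure ν]

theorem norm_oneL2 : ‖oneL2 ν‖ = 1 := by
  simp [oneL2, Lp.norm_const]

theorem smul_oneL2 (c : ℝ) : c • oneL2 ν = Lp.const 2 ν c := by
  simpa [oneL2] using (map_smul (Lp.constₗ 2 ν ℝ) c (1 : ℝ)).symm

theorem theta_eq_starProjection : Theta ν = (ℝ ∙ oneL2 ν).starProjection := by
  ext1 f
  rw [Submodule.starProjection_unit_singleton ℝ (norm_oneL2 ν)]
  rfl

theorem comp_theta_of_map_oneL2 {J : Lp ℝ 2 ν →L[ℝ] Lp ℝ 2 ν} (hJ : J (oneL2 ν) = oneL2 ν) :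
    J ∘L Theta ν = Theta ν := by
  ext1 f
  simp [Theta, hJ]

variable {ν} {T : X → X}

theorem koopman_oneL2 (hT : MeasurePreserving T ν ν) : koopman ν hT (oneL2 ν) = oneL2 ν :=
  Lp.toLp_compMeasurePreserving (memLp_const (1 : ℝ)) hT

theorem norm_koopman_le_one (hT : MeasurePreserving T ν ν) : ‖koopman ν hT‖ ≤ 1 :=
  (koopman ν hT).opNorm_le_bound zero_le_one fun g ↦ by
    rw [one_mul]
    exact (Lp.norm_compMeasurePreserving g hT).le

theorem Ergodic.eqLocus_koopman_eq_span (hT : Ergodic T ν) :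
    (koopman ν hT.toMeasurePreserving).eqLocus (1 : Lp ℝ 2 ν →L[ℝ] Lp ℝ 2 ν) = ℝ ∙ oneL2 ν := by
  refine le_antisymm (fun g hg ↦ ?_) ?_
  · have hinv : (g : X → ℝ) ∘ T =ᵐ[ν] g := by
      have hcomp := Lp.coeFn_compMeasurePreserving g hT.toMeasurePreserving
      rwa [show Lp.compMeasurePreserving T _ g = g from hg, eventuallyEq_comm] at hcomp
    obtain ⟨c, hc⟩ := hT.ae_eq_const_of_ae_eq_comp_ae (Lp.aestronglyMeasurable g) hinv
    refine Submodule.mem_span_singleton.2 ⟨c, ?_⟩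
    rw [smul_oneL2]
    exact Lp.ext ((Lp.coeFn_const 2 ν c).trans hc.symm)
  · rw [Submodule.span_singleton_le_iff_mem]
    exact koopman_oneL2 hT.toMeasurePreserving

end L2

/-- If `T` is an ergodic invertible measure-preserving transformation and `J` is a
Markov operator with `J ∘ T̂ = J`, then `J = Θ`. -/
theorem markov_fixed_right_of_ergodic {X : Type*} [MeasurableSpace X]
    (ν : Measure X) [IsProbabilityMeasure ν]
    (T : X ≃ᵐ X) (hT : Ergodic (⇑T) ν)
    (J : Lp ℝ 2 ν →L[ℝ] Lp ℝ 2 ν) (hJ : IsMarkov ν J)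
    (h : J ∘L koopman ν hT.toMeasurePreserving = J) : J = Theta ν := by
  have hJP := (koopman ν hT.toMeasurePreserving).comp_starProjection_eqLocus_of_comp_eq
    (norm_koopman_le_one hT.toMeasurePreserving) h
  simp only [hT.eqLocus_koopman_eq_span, ← theta_eq_starProjection] at hJP
  rw [← hJP, comp_theta_of_map_oneL2 ν hJ.map_one]
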